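/- Let {K_n} be a Kangaroo recurrence with ℓ hops of length g. No legal decomposition contains all of the ℓ+1 summands K_i, K_{i+g}, K_{i+2g}, …, K_{i+ℓg} for any i ≥ 1; that is, a legal decomposition can contain at most ℓ−1 consecutive gaps of length exactly g. -/

import Mathlib

/-- The coefficients of a Kangaroo recurrence with `ℓ` hops of length `g`:
`c i = 1` for `i = 1, g+1, 2g+1, …, ℓg+1` and `c i = 0` otherwise. -/
def kanC (g ℓ : ℕ) (i : ℕ) : ℕ :=
  if 1 ≤ i ∧ i ≤ ℓ * g + 1 ∧ i % g = 1 % g then 1 else 0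

/-- Legality of a coefficient sequence `a_1, …, a_m` (encoded as a list) with respect to a
positive linear recurrence with coefficients `c_1, …, c_L`. -/
inductive IsLegal (L : ℕ) (c : ℕ → ℕ) : List ℕ → Prop
  | short (m : ℕ) (h : m < L) :
      IsLegal L c ((List.range m).map fun i => c (i + 1))
  | long (s t : ℕ) (a : ℕ) (rest : List ℕ)
      (hs1 : 1 ≤ s) (hsL : s ≤ L) (ha : a < c s)
      (hrest : IsLegal L c rest) :
      IsLegal L c
        (((List.range (s - 1)).map fun i => c (i + 1)) ++ a :: (List.replicate t 0 ++ rest))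

/-- The indicator list `a_1, …, a_m` of a set `S` of indices, where `a_j = 1` iff
`m + 1 - j ∈ S` (so the list entry `a_1` corresponds to the largest index `m`). -/
def indList (m : ℕ) (S : Finset ℕ) : List ℕ :=
  (List.range m).map fun j => if m - j ∈ S then 1 else 0

/-- A finite set `S` of indices is legal if all its elements are `≥ 1` and, when `S` is
nonempty, the indicator coefficient list (of length the maximum of `S`) is legal. -/
def IsLegalSet (L : ℕ) (c : ℕ → ℕ) (S : Finset ℕ) : Prop :=
  (∀ i ∈ S, 1 ≤ i) ∧ (S.Nonempty → IsLegal L c (indList (S.sup id) S))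

/-
A legal decomposition is a concatenation of blocks `c_1, …, c_{s-1}, a, 0, …, 0` with `a < c_s`,
possibly followed by a final block `c_1, …, c_m` with `m ≤ ℓg`. As `c_s ≠ 0` forces
`s ≡ 1 (mod g)` and `s ≤ ℓg + 1`, and the nonzero entries of a block sit at positions
`≡ 1 (mod g)`, a run of `ℓ + 1` nonzero entries at distance `g` starting in a block must reach
its position `s`, where the entry is `a = 0` because every `c_i ≤ 1`; in the final block it runs
past the end of the decomposition.
-/

lemma kanC_le_one (g ℓ p : ℕ) : kanC g ℓ p ≤ 1 := by
  unfold kanC; split <;> simp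

lemma dvd_sub_one_of_kanC_ne_zero {g ℓ p : ℕ} (h : kanC g ℓ p ≠ 0) :
    1 ≤ p ∧ p ≤ ℓ * g + 1 ∧ g ∣ p - 1 := by
  unfold kanC at h
  split_ifs at h with hp
  · exact ⟨hp.1, hp.2.1, (Nat.modEq_iff_dvd' hp.1).mp hp.2.2.symm⟩
  · exact absurd rfl h

def legalBlock (c : ℕ → ℕ) (s a t : ℕ) : List ℕ :=
  (List.range (s - 1)).map (fun i => c (i + 1)) ++ a :: List.replicate t 0

lemma length_legalBlock (c : ℕ → ℕ) {s : ℕ} (hs : 1 ≤ s) (a t : ℕ) :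
    (legalBlock c s a t).length = s + t := by
  simp only [legalBlock, List.length_append, List.length_map, List.length_range,
    List.length_cons, List.length_replicate]
  omega

lemma getD_legalBlock (c : ℕ → ℕ) {s : ℕ} (hs : 1 ≤ s) (a t n : ℕ) :
    (legalBlock c s a t).getD n 0 =
      if n + 1 < s then c (n + 1) else if n + 1 = s then a else 0 := by
  have hpre : ((List.range (s - 1)).map (fun i => c (i + 1))).length = s - 1 := by simp
  unfold legalBlock
  split_ifs with h₁ h₂
  · rw [List.getD_append _ _ _ _ (by omega)]
    simp [List.getD_eq_getElem?_getD, List.getElem?_range (show n < s - 1 by omega)]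
  · rw [List.getD_append_right _ _ _ _ (by omega), hpre, show n - (s - 1) = 0 by omega]
    rfl
  · rw [List.getD_append_right _ _ _ _ (by omega), hpre]
    obtain ⟨k, hk⟩ : ∃ k, n - (s - 1) = k + 1 := ⟨n - s, by omega⟩
    rw [hk, List.getD_cons_succ]
    simp [List.getD_eq_getElem?_getD]

lemma legalBlock_append (c : ℕ → ℕ) (s a t : ℕ) (rest : List ℕ) :
    legalBlock c s a t ++ rest =
      (List.range (s - 1)).map (fun i => c (i + 1)) ++ a :: (List.replicate t 0 ++ rest) := by
  simp [legalBlock]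

def HasGapRun (g ℓ : ℕ) (l : List ℕ) (j : ℕ) : Prop :=
  ∀ m ≤ ℓ, l.getD (j + m * g) 0 ≠ 0

lemma not_hasGapRun_legalBlock_append {g ℓ s a t j : ℕ} (hg : 1 ≤ g) (ha : a < kanC g ℓ s)
    (hj : j < s + t) (rest : List ℕ) :
    ¬ HasGapRun g ℓ (legalBlock (kanC g ℓ) s a t ++ rest) j := by
  intro hrun
  obtain ⟨hs, hsL, hgs⟩ := dvd_sub_one_of_kanC_ne_zero (Nat.ne_zero_of_lt ha)
  have ha0 : a = 0 := by have := kanC_le_one g ℓ s; omega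
  have hlen := length_legalBlock (kanC g ℓ) hs a t
  have hstart := hrun 0 (Nat.zero_le _)
  rw [zero_mul, add_zero, List.getD_append _ _ _ _ (by omega), getD_legalBlock _ hs] at hstart
  have hjs : j + 1 < s := by split_ifs at hstart <;> omega
  rw [if_pos hjs] at hstart
  have hgj : g ∣ j := by simpa using (dvd_sub_one_of_kanC_ne_zero hstart).2.2
  obtain ⟨k, hk⟩ : g ∣ s - 1 - j := Nat.dvd_sub hgs hgj
  have hkℓ : k ≤ ℓ := by
    refine Nat.le_of_mul_le_mul_left ?_ hg
    rw [← hk, mul_comm]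
    omega
  have hend := hrun k hkℓ
  rw [mul_comm, ← hk, List.getD_append _ _ _ _ (by omega), getD_legalBlock _ hs,
    if_neg (by omega), if_pos (by omega)] at hend
  exact hend ha0

theorem IsLegal.not_hasGapRun {g ℓ : ℕ} (hg : 1 ≤ g) {l : List ℕ}
    (h : IsLegal (ℓ * g + 1) (kanC g ℓ) l) (j : ℕ) : ¬ HasGapRun g ℓ l j := by
  induction h generalizing j with
  | short m hm =>
    intro hrun
    refine hrun ℓ le_rfl (List.getD_eq_default _ _ ?_)
    simp only [List.length_map, List.length_range]
    omega
  | long s t a rest hs _ ha _ ih =>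
    rw [← legalBlock_append]
    rcases lt_or_ge j (s + t) with hj | hj
    · exact not_hasGapRun_legalBlock_append hg ha hj rest
    · intro hrun
      refine ih (j - (s + t)) fun m hm => ?_
      have := hrun m hm
      rwa [List.getD_append_right _ _ _ _ (by rw [length_legalBlock _ hs]; omega),
        length_legalBlock _ hs, show j + m * g - (s + t) = j - (s + t) + m * g by omega] at this

lemma getD_indList_of_mem {M x : ℕ} {S : Finset ℕ} (hx : x ∈ S) (hx1 : 1 ≤ x)
    (hxM : x ≤ M) :
    (indList M S).getD (M - x) 0 = 1 := by
  have hlen : (indList M S).length = M := by simp [indList]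
  rw [List.getD_eq_getElem _ _ (by omega)]
  simp [indList, Nat.sub_sub_self hxM, hx]

theorem kangaroo_no_full_run_general (g ℓ : ℕ) (hg : 1 ≤ g)
    (S : Finset ℕ) (hS : IsLegalSet (ℓ * g + 1) (kanC g ℓ) S)
    (i : ℕ) :
    ¬ (∀ m ≤ ℓ, i + m * g ∈ S) := by
  intro hrun
  obtain ⟨hpos, hlegal⟩ := hS
  set M := S.sup id
  have hrunM : ∀ m ≤ ℓ, i + m * g ≤ M := fun m hm => Finset.le_sup (f := id) (hrun m hm)
  refine (hlegal ⟨_, hrun 0 (Nat.zero_le _)⟩).not_hasGapRun hg (M - (i + ℓ * g))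
    fun m hm => ?_
  have hidx : M - (i + ℓ * g) + m * g = M - (i + (ℓ - m) * g) := by
    have := hrunM ℓ le_rfl
    have : m * g ≤ ℓ * g := Nat.mul_le_mul_right g hm
    rw [Nat.sub_mul]
    omega
  have hmem := hrun (ℓ - m) (Nat.sub_le _ _)
  rw [hidx, getD_indList_of_mem hmem (hpos _ hmem) (hrunM _ (Nat.sub_le _ _))]
  exact one_ne_zero

/-- For a Kangaroo recurrence with `ℓ` hops of length `g`, no legal
index set contains all of the `ℓ+1` indices `i, i+g, i+2g, …, i+ℓg` for any `i ≥ 1`;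
that is, a legal decomposition has at most `ℓ-1` consecutive gaps of length exactly `g`. -/
theorem kangaroo_no_full_run (g ℓ : ℕ) (hg : 1 ≤ g) (hℓ : 1 ≤ ℓ)
    (K : ℕ → ℕ) (hK1 : K 1 = 1)
    (hKsmall : ∀ n, 1 ≤ n → n < ℓ * g + 1 →
      K (n + 1) = (∑ p ∈ Finset.Icc 1 n, kanC g ℓ p * K (n + 1 - p)) + 1)
    (hKrec : ∀ n, ℓ * g + 1 ≤ n →
      K (n + 1) = ∑ p ∈ Finset.Icc 1 (ℓ * g + 1), kanC g ℓ p * K (n + 1 - p))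
    (S : Finset ℕ) (hS : IsLegalSet (ℓ * g + 1) (kanC g ℓ) S)
    (i : ℕ) (hi : 1 ≤ i) :
    ¬ (∀ m ≤ ℓ, i + m * g ∈ S) :=
  kangaroo_no_full_run_general g ℓ hg S hS i
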